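/- arXiv:2404.08963 — 4 statements merged into one kernel-verified Lean document; each statement's English description precedes it below -/
import Mathlib

section
/- In the one-dimensional facility assignment game with fair cost sharing, let s be a pure Nash equilibrium. Then for any two agents a and b with x_a < x_b, the locations of their chosen facilities satisfy ℓ_{s_a} ≤ ℓ_{s_b} (the 'no-cross' property). -/
/-- Number of agents assigned to facility `j` under assignment `s`. -/
def facCount {n m : ℕ} (s : Fin n → Fin m) (j : Fin m) : ℕ :=
  (Finset.univ.filter fun i => s i = j).card

/-- Cost of an agent with true position `y` under assignment `s`, being agent `i`:
connection cost plus her share of the building cost. -/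
noncomputable def agentCost {n m : ℕ} (ℓ bc : Fin m → ℝ) (y : ℝ)
    (s : Fin n → Fin m) (i : Fin n) : ℝ :=
  |y - ℓ (s i)| + bc (s i) / (facCount s (s i) : ℝ)

/-- A pure Nash equilibrium: no agent can decrease her cost by unilaterally
changing her chosen facility. -/
def isPNE {n m : ℕ} (x : Fin n → ℝ) (ℓ bc : Fin m → ℝ) (s : Fin n → Fin m) : Prop :=
  ∀ (i : Fin n) (j' : Fin m),
    agentCost ℓ bc (x i) s i ≤ agentCost ℓ bc (x i) (Function.update s i j') i

lemma facCount_pos {n m : ℕ} (s : Fin n → Fin m) (i : Fin n) :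
    0 < facCount s (s i) := by
  apply Finset.card_pos.2
  exact ⟨i, by simp⟩

lemma facCount_update {n m : ℕ} (s : Fin n → Fin m) (i : Fin n) (j' : Fin m)
    (h : s i ≠ j') :
    facCount (Function.update s i j') j' = facCount s j' + 1 := by
  unfold facCount
  have : (Finset.univ.filter fun k => Function.update s i j' k = j')
      = insert i (Finset.univ.filter fun k => s k = j') := by
    ext k
    by_cases hk : k = i <;> simp [Function.update, hk]
  rw [this, Finset.card_insert_of_notMem (by simp [h])]

lemma quadrangle (p q u v : ℝ) (hpq : p ≤ q) (huv : u ≤ v) :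
    |p - u| + |q - v| ≤ |p - v| + |q - u| := by
  rcases abs_cases (p - u) with ⟨h1, h1'⟩ | ⟨h1, h1'⟩ <;>
  rcases abs_cases (q - v) with ⟨h2, h2'⟩ | ⟨h2, h2'⟩ <;>
  rcases abs_cases (p - v) with ⟨h3, h3'⟩ | ⟨h3, h3'⟩ <;>
  rcases abs_cases (q - u) with ⟨h4, h4'⟩ | ⟨h4, h4'⟩ <;>
  linarith

/-- The "no-cross" property of pure Nash equilibria in the one-dimensional
facility assignment game with fair cost sharing. -/
theorem pne_no_cross {n m : ℕ} (x : Fin n → ℝ) (ℓ bc : Fin m → ℝ)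
    (hb : ∀ j, 0 < bc j) (s : Fin n → Fin m)
    (hPNE : isPNE x ℓ bc s) (a b : Fin n) (hab : x a < x b) :
    ℓ (s a) ≤ ℓ (s b) := by
  by_contra h
  push_neg at h
  have hne : s b ≠ s a := fun e => by rw [e] at h; exact lt_irrefl _ h
  have hnA : 0 < facCount s (s a) := facCount_pos s a
  have hnB : 0 < facCount s (s b) := facCount_pos s b
  have h1 := hPNE a (s b)
  have h2 := hPNE b (s a)
  unfold agentCost at h1 h2
  rw [Function.update_self] at h1 h2
  rw [facCount_update s a (s b) (Ne.symm hne)] at h1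
  rw [facCount_update s b (s a) hne] at h2
  have hAr : (0 : ℝ) < (facCount s (s a) : ℝ) := by exact_mod_cast hnA
  have hBr : (0 : ℝ) < (facCount s (s b) : ℝ) := by exact_mod_cast hnB
  have hA' : bc (s a) / ((facCount s (s a) : ℝ) + 1) < bc (s a) / (facCount s (s a) : ℝ) :=
    div_lt_div_of_pos_left (hb _) hAr (by linarith)
  have hB' : bc (s b) / ((facCount s (s b) : ℝ) + 1) < bc (s b) / (facCount s (s b) : ℝ) :=
    div_lt_div_of_pos_left (hb _) hBr (by linarith)
  push_cast at h1 h2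
  have hq := quadrangle (x a) (x b) (ℓ (s b)) (ℓ (s a)) hab.le h.le
  linarith
end

section
/- In the one-dimensional facility assignment game with fair cost sharing with n ≥ 1 agents and m ≥ 1 facilities, let ŝ be an assignment minimizing the potential function Φ (which is a pure Nash equilibrium) and let s* be an assignment minimizing the social cost. Then SC(ŝ) ≤ H_n · SC(s*), where H_n = Σ_{k=1}^n 1/k is the n-th harmonic number. -/
/-- Social cost of an assignment: total cost of all agents. -/
noncomputable def socialCost {n m : ℕ} (x : Fin n → ℝ) (ℓ bc : Fin m → ℝ)
    (s : Fin n → Fin m) : ℝ :=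
  ∑ i : Fin n, agentCost ℓ bc (x i) s i

/-- Rosenthal's potential function. -/
noncomputable def potential {n m : ℕ} (x : Fin n → ℝ) (ℓ bc : Fin m → ℝ)
    (s : Fin n → Fin m) : ℝ :=
  (∑ j : Fin m, ∑ k ∈ Finset.Icc 1 (facCount s j), bc j / (k : ℝ)) +
  ∑ i : Fin n, |x i - ℓ (s i)|

/-- The `n`-th harmonic number `H_n = Σ_{k=1}^n 1/k`. -/
noncomputable def harmonicNum (n : ℕ) : ℝ :=
  ∑ k ∈ Finset.Icc 1 n, (1 : ℝ) / (k : ℝ)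

lemma socialCost_eq {n m : ℕ} (x : Fin n → ℝ) (ℓ bc : Fin m → ℝ) (s : Fin n → Fin m) :
    socialCost x ℓ bc s =
      (∑ j : Fin m, if facCount s j = 0 then 0 else bc j) +
      ∑ i : Fin n, |x i - ℓ (s i)| := by
  unfold socialCost agentCost
  rw [Finset.sum_add_distrib, add_comm]
  congr 1
  have h := Finset.sum_fiberwise_of_maps_to (s := (Finset.univ : Finset (Fin n)))
    (t := (Finset.univ : Finset (Fin m))) (g := s)
    (f := fun i => bc (s i) / (facCount s (s i) : ℝ))
    (fun i _ => Finset.mem_univ (s i))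
  rw [← h]
  refine Finset.sum_congr rfl fun j _ => ?_
  have : ∀ i ∈ Finset.univ.filter fun i => s i = j,
      bc (s i) / (facCount s (s i) : ℝ) = bc j / (facCount s j : ℝ) := by
    intro i hi
    simp only [Finset.mem_filter] at hi
    rw [hi.2]
  rw [Finset.sum_congr rfl this, Finset.sum_const, nsmul_eq_mul]
  by_cases h0 : facCount s j = 0
  · simp [facCount] at h0 ⊢
    simp [h0]
  · simp only [h0, if_false]
    rw [show (Finset.univ.filter fun i => s i = j).card = facCount s j from rfl]
    field_simp

lemma facCount_le {n m : ℕ} (s : Fin n → Fin m) (j : Fin m) : facCount s j ≤ n := by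
  unfold facCount
  calc _ ≤ (Finset.univ : Finset (Fin n)).card := Finset.card_filter_le _ _
    _ = n := by simp

lemma sc_le_pot {n m : ℕ} (x : Fin n → ℝ) (ℓ bc : Fin m → ℝ) (hb : ∀ j, 0 < bc j)
    (s : Fin n → Fin m) : socialCost x ℓ bc s ≤ potential x ℓ bc s := by
  rw [socialCost_eq]
  unfold potential
  gcongr with j _
  by_cases h0 : facCount s j = 0
  · simp [h0]
  · simp only [h0, if_false]
    have h1 : 1 ∈ Finset.Icc 1 (facCount s j) := by
      simp; omega
    calc bc j = bc j / ((1 : ℕ) : ℝ) := by simp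
      _ ≤ _ := Finset.single_le_sum (f := fun k : ℕ => bc j / (k : ℝ))
          (fun k _ => div_nonneg (hb j).le (Nat.cast_nonneg k)) h1

lemma pot_le_sc {n m : ℕ} (hn : 0 < n) (x : Fin n → ℝ) (ℓ bc : Fin m → ℝ)
    (hb : ∀ j, 0 < bc j) (s : Fin n → Fin m) :
    potential x ℓ bc s ≤ harmonicNum n * socialCost x ℓ bc s := by
  have hH1 : (1:ℝ) ≤ harmonicNum n := by
    unfold harmonicNum
    have h1 : 1 ∈ Finset.Icc 1 n := by simp; omega
    calc (1:ℝ) = 1 / ((1:ℕ):ℝ) := by simp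
      _ ≤ _ := Finset.single_le_sum (f := fun k : ℕ => (1:ℝ) / (k : ℝ))
          (fun k _ => by positivity) h1
  rw [socialCost_eq]
  unfold potential
  rw [mul_add]
  gcongr (?_ : ℝ) + ?_
  · rw [Finset.mul_sum]
    gcongr with j _
    by_cases h0 : facCount s j = 0
    · simp [h0]
    · simp only [h0, if_false]
      have : ∑ k ∈ Finset.Icc 1 (facCount s j), bc j / (k : ℝ)
          = (∑ k ∈ Finset.Icc 1 (facCount s j), (1:ℝ) / (k : ℝ)) * bc j := by
        rw [Finset.sum_mul]
        refine Finset.sum_congr rfl fun k _ => ?_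
        ring
      rw [this, harmonicNum]
      exact mul_le_mul_of_nonneg_right
        (Finset.sum_le_sum_of_subset_of_nonneg
          (Finset.Icc_subset_Icc_right (facCount_le s j))
          (fun k _ _ => div_nonneg zero_le_one (Nat.cast_nonneg k))) (hb j).le
  · calc (∑ i : Fin n, |x i - ℓ (s i)|) = 1 * ∑ i : Fin n, |x i - ℓ (s i)| := by ring
      _ ≤ _ := mul_le_mul_of_nonneg_right hH1
        (Finset.sum_nonneg fun i _ => abs_nonneg _)

/-- Price of stability bound: if `ŝ` minimizes the potential function and `s*`
minimizes the social cost, then `SC(ŝ) ≤ H_n · SC(s*)`. -/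
theorem potential_minimizer_harmonic_approx {n m : ℕ} (hn : 0 < n) (hm : 0 < m)
    (x : Fin n → ℝ) (ℓ bc : Fin m → ℝ) (hb : ∀ j, 0 < bc j)
    (sHat sStar : Fin n → Fin m)
    (hHat : ∀ s : Fin n → Fin m, potential x ℓ bc sHat ≤ potential x ℓ bc s)
    (hStar : ∀ s : Fin n → Fin m, socialCost x ℓ bc sStar ≤ socialCost x ℓ bc s) :
    socialCost x ℓ bc sHat ≤ harmonicNum n * socialCost x ℓ bc sStar := by
  calc socialCost x ℓ bc sHat ≤ potential x ℓ bc sHat := sc_le_pot x ℓ bc hb sHat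
    _ ≤ potential x ℓ bc sStar := hHat sStar
    _ ≤ harmonicNum n * socialCost x ℓ bc sStar := pot_le_sc hn x ℓ bc hb sStar
end

section
/- Let f be a strategyproof and anonymous mechanism. For any profile x = (x_1, …, x_n) and any profile x' = (x'_i, x_{−i}) obtained by changing agent i's report, let j = f_i(x), j' = f_i(x'), n_j = n_j(f(x)) and n'_{j'} = n_{j'}(f(x')). If x_i < x'_i and ℓ_{j'} < ℓ_j, then x'_i ≤ ℓ_{j'} or ℓ_j ≤ x_i. -/
/-- A mechanism is strategyproof if no agent can decrease her (true) cost
by misreporting her position. -/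
def Strategyproof {n m : ℕ} (ℓ bc : Fin m → ℝ)
    (f : (Fin n → ℝ) → Fin n → Fin m) : Prop :=
  ∀ (x : Fin n → ℝ) (i : Fin n) (xi' : ℝ),
    agentCost ℓ bc (x i) (f x) i ≤
      agentCost ℓ bc (x i) (f (Function.update x i xi')) i

/-- A mechanism is anonymous if permuting the reported positions permutes the
assignment accordingly. -/
def Anonymous {n m : ℕ} (f : (Fin n → ℝ) → Fin n → Fin m) : Prop :=
  ∀ (π : Equiv.Perm (Fin n)) (x : Fin n → ℝ) (i : Fin n),
    f (x ∘ π) i = f x (π i)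

/-- Property (P1): if agent `i` moves right (`x_i < x'_i`) and her assigned
facility moves left (`ℓ_{j'} < ℓ_j`), then `x'_i ≤ ℓ_{j'}` or `ℓ_j ≤ x_i`. -/
theorem sp_anonymous_P1 {n m : ℕ} (ℓ bc : Fin m → ℝ) (hb : ∀ j, 0 < bc j)
    (f : (Fin n → ℝ) → Fin n → Fin m)
    (hsp : Strategyproof ℓ bc f) (han : Anonymous f)
    (x : Fin n → ℝ) (i : Fin n) (xi' : ℝ)
    (j j' : Fin m) (hj : j = f x i) (hj' : j' = f (Function.update x i xi') i)
    (hx : x i < xi') (hℓ : ℓ j' < ℓ j) :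
    xi' ≤ ℓ j' ∨ ℓ j ≤ x i := by
  by_contra hcon
  push_neg at hcon
  obtain ⟨h1', h2'⟩ := hcon
  have hA := hsp x i xi'
  have hB := hsp (Function.update x i xi') i (x i)
  rw [show Function.update (Function.update x i xi') i (x i) = x by
    rw [Function.update_idem, Function.update_eq_self]] at hB
  simp only [agentCost, Function.update_self] at hA hB
  rw [← hj, ← hj'] at hA hB
  have key : |x i - ℓ j| + |xi' - ℓ j'| ≤ |x i - ℓ j'| + |xi' - ℓ j| := by linarith
  rcases abs_cases (x i - ℓ j) with ⟨e1, _⟩ | ⟨e1, _⟩ <;>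
    rcases abs_cases (xi' - ℓ j') with ⟨e2, _⟩ | ⟨e2, _⟩ <;>
    rcases abs_cases (x i - ℓ j') with ⟨e3, _⟩ | ⟨e3, _⟩ <;>
    rcases abs_cases (xi' - ℓ j) with ⟨e4, _⟩ | ⟨e4, _⟩ <;>
    linarith
end

section
/- Let f be a strategyproof and anonymous mechanism. For any profile x = (x_1, …, x_n) and any profile x' = (x'_i, x_{−i}) obtained by changing agent i's report, let j = f_i(x) and j' = f_i(x'). If j = j', then the number of agents assigned to j is the same under both outcomes: n_j(f(x)) = n_j(f(x')). -/
/-!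
If agent `i` stays at facility `j`, her distance cost is the same before and after the
misreport, so strategyproofness applied in both directions (at `x` with misreport `xi'`, and
at the updated profile with misreport `x i`) forces equal shares `b_j / n_j`; as `b_j ≠ 0`,
the counts agree.
-/

theorem div_right_injective₀ {K : Type*} [DivisionRing K] {a : K} (ha : a ≠ 0) :
    Function.Injective fun b : K => a / b := fun b c h => by
  simpa only [div_eq_mul_inv, mul_right_inj' ha, inv_inj] using h

namespace Strategyproof

variable {n m : ℕ} {ℓ bc : Fin m → ℝ} {f : (Fin n → ℝ) → Fin n → Fin m}

theorem share_le (hsp : Strategyproof ℓ bc f) {x : Fin n → ℝ} {i : Fin n} {xi' : ℝ}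
    {j : Fin m} (hx : f x i = j) (hx' : f (Function.update x i xi') i = j) :
    bc j / facCount (f x) j ≤ bc j / facCount (f (Function.update x i xi')) j := by
  have h := hsp x i xi'
  simp only [agentCost, hx, hx'] at h
  linarith

theorem share_eq (hsp : Strategyproof ℓ bc f) {x : Fin n → ℝ} {i : Fin n} {xi' : ℝ}
    {j : Fin m} (hx : f x i = j) (hx' : f (Function.update x i xi') i = j) :
    bc j / facCount (f x) j = bc j / facCount (f (Function.update x i xi')) j := by
  have hback : Function.update (Function.update x i xi') i (x i) = x := by
    rw [Function.update_idem, Function.update_eq_self]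
  refine le_antisymm (hsp.share_le hx hx') ?_
  simpa only [hback] using hsp.share_le (xi' := x i) hx' (by rwa [hback])

end Strategyproof

theorem sp_anonymous_P3_general {n m : ℕ} (ℓ bc : Fin m → ℝ) (hb : ∀ j, 0 < bc j)
    (f : (Fin n → ℝ) → Fin n → Fin m)
    (hsp : Strategyproof ℓ bc f)
    (x : Fin n → ℝ) (i : Fin n) (xi' : ℝ)
    (j j' : Fin m) (hj : j = f x i) (hj' : j' = f (Function.update x i xi') i)
    (hjj' : j = j') :
    facCount (f x) j = facCount (f (Function.update x i xi')) j := by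
  subst hjj'
  have hshare := hsp.share_eq hj.symm hj'.symm
  exact_mod_cast div_right_injective₀ (hb j).ne' hshare

/-- Property (P3): if an agent's assigned facility is the same before and after
a unilateral misreport, then the number of agents assigned to that facility is
also the same. -/
theorem sp_anonymous_P3 {n m : ℕ} (ℓ bc : Fin m → ℝ) (hb : ∀ j, 0 < bc j)
    (f : (Fin n → ℝ) → Fin n → Fin m)
    (hsp : Strategyproof ℓ bc f) (han : Anonymous f)
    (x : Fin n → ℝ) (i : Fin n) (xi' : ℝ)
    (j j' : Fin m) (hj : j = f x i) (hj' : j' = f (Function.update x i xi') i)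
    (hjj' : j = j') :
    facCount (f x) j = facCount (f (Function.update x i xi')) j :=
  sp_anonymous_P3_general ℓ bc hb f hsp x i xi' j j' hj hj' hjj'
end
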